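/- arXiv:1708.07464 — 3 statements merged into one kernel-verified Lean document; each statement's English description precedes it below -/
import Mathlib

section
/- The ℚ-vector space Z_q[1] equals the ℚ-span of the Bradley–Zhao model: Z_q[1] = ⟨ ζ^BZ_q(s_1,…,s_l) : l ≥ 0, s_1 ≥ 2, s_2,…,s_l ≥ 1 ⟩_ℚ, where ζ^BZ_q(s_1,…,s_l) := ζ_q(s_1,…,s_l; t^{s_1−1},…,t^{s_l−1}) = Σ_{n_1>⋯>n_l>0} q^{(s_1−1)n_1}⋯q^{(s_l−1)n_l} / ((1−q^{n_1})^{s_1}⋯(1−q^{n_l})^{s_l}). -/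
/-!
A polynomial `Q` of degree `< s` expands in the basis `t^i (1-t)^(s-1-i)`, `i < s`, whence
`Q(x) / (1-x)^s = ∑ c_i x^i / (1-x)^(i+1)` with `c_0 = Q(0)`. Multiplying these expansions out
over the `l` positions of a summand of `ζ_q(s; Q)` writes it as a ℚ-combination of summands of
Bradley–Zhao values `ζ^BZ_q(i_1+1, …, i_l+1)`; since `Q_1(0) = 0`, only `i_1 ≥ 1` survives.
The exchange with the infinite sum is harmless: the coefficient of `q^m` of a summand vanishes
unless `n_1 ≤ m`, because `q^(n_1)` divides `Q_1(q^(n_1))`.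
-/

/-- The q-analogue ζ_q(s_1,…,s_l;Q_1,…,Q_l) ∈ ℚ[[q]], defined coefficientwise:
the coefficient of q^m is the (convergent, since each summand with n_1 > m
contributes 0 once Q_1 has no constant term) sum over strictly decreasing tuples
n_1 > ⋯ > n_l > 0 of the coefficient of q^m in
Q_1(q^{n_1})⋯Q_l(q^{n_l}) / ((1−q^{n_1})^{s_1}⋯(1−q^{n_l})^{s_l}). -/
noncomputable def zetaQ (l : ℕ) (s : Fin l → ℕ) (Q : Fin l → Polynomial ℚ) : PowerSeries ℚ :=
  PowerSeries.mk fun m =>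
    ∑' n : {n : Fin l → ℕ // StrictAnti n ∧ ∀ i, 0 < n i},
      PowerSeries.coeff m
        (∏ j, Polynomial.aeval (PowerSeries.X ^ (n.1 j)) (Q j) *
          ((1 - PowerSeries.X ^ (n.1 j))⁻¹) ^ (s j))

/-- Z_q[1]: the ℚ-span of the ζ_q(s_1,…,s_l;Q_1,…,Q_l) with l ≥ 0, all s_j ≥ 1,
deg Q_j ≤ s_j − 1 (i.e. Q_j = 0 or natDegree Q_j + 1 ≤ s_j) and Q_1 ∈ tℚ[t]. -/
noncomputable def Zq1 : Submodule ℚ (PowerSeries ℚ) :=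
  Submodule.span ℚ {f | ∃ (l : ℕ) (s : Fin l → ℕ) (Q : Fin l → Polynomial ℚ),
    (∀ j, 1 ≤ s j) ∧ (∀ j, Q j = 0 ∨ (Q j).natDegree + 1 ≤ s j) ∧
    (∀ h : 0 < l, (Q ⟨0, h⟩).coeff 0 = 0) ∧ f = zetaQ l s Q}

open Polynomial

namespace Polynomial

variable {R : Type*} [CommRing R]

theorem exists_eq_sum_C_mul_X_pow_mul_one_sub_X_pow {s : ℕ} {Q : R[X]} (hQ : Q.degree < s) :
    ∃ c : ℕ → R, c 0 = Q.coeff 0 ∧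
      Q = ∑ i ∈ Finset.range s, C (c i) * X ^ i * (1 - X) ^ (s - 1 - i) := by
  induction s generalizing Q with
  | zero => exact ⟨fun _ => Q.coeff 0, rfl, by simpa using hQ⟩
  | succ s ih =>
    obtain ⟨P, hP⟩ : X ∣ Q - C (Q.coeff 0) * (1 - X) ^ s :=
      X_dvd_iff.mpr (by simp [coeff_zero_eq_eval_zero])
    have hPdeg : P.degree < s := by
      have hdeg : (C (Q.coeff 0) * (1 - X) ^ s).natDegree ≤ s := by compute_degree
      refine (degree_lt_iff_coeff_zero _ _).mpr fun m hm => ?_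
      rw [← coeff_X_mul, ← hP, coeff_sub, (degree_lt_iff_coeff_zero _ _).mp hQ _ (by omega),
        coeff_eq_zero_of_natDegree_lt (p := C (Q.coeff 0) * (1 - X) ^ s) (by omega), sub_zero]
    obtain ⟨c, -, hc⟩ := ih hPdeg
    refine ⟨fun | 0 => Q.coeff 0 | i + 1 => c i, rfl, ?_⟩
    calc Q = C (Q.coeff 0) * (1 - X) ^ s + X * P := by rw [← hP]; ring
      _ = _ := by
        rw [Finset.sum_range_succ', hc, Finset.mul_sum, add_comm]
        congr 1
        · refine Finset.sum_congr rfl fun i _ => ?_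
          rw [show s + 1 - 1 - (i + 1) = s - 1 - i by omega]
          ring
        · simp

variable {A : Type*} [CommRing A] [Algebra R A]

theorem aeval_C_mul_X_pow_mul_one_sub_X_pow_mul_pow {a y : A} (hy : (1 - a) * y = 1) (c : R)
    {i s : ℕ} (hi : i < s) :
    aeval a (C c * X ^ i * (1 - X) ^ (s - 1 - i)) * y ^ s = c • (a ^ i * y ^ (i + 1)) := by
  obtain ⟨k, rfl⟩ : ∃ k, s = k + (i + 1) := ⟨s - (i + 1), by omega⟩
  rw [show k + (i + 1) - 1 - i = k by omega, Algebra.smul_def]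
  simp only [map_mul, map_pow, map_sub, map_one, aeval_X, aeval_C]
  calc _ = algebraMap R A c * a ^ i * ((1 - a) ^ k * y ^ k) * y ^ (i + 1) := by ring
    _ = _ := by rw [← mul_pow, hy, one_pow]; ring

theorem dvd_aeval_self_of_coeff_zero_eq_zero {Q : R[X]} (hQ : Q.coeff 0 = 0) (a : A) :
    a ∣ aeval a Q := by
  simpa using _root_.map_dvd (aeval a) (X_dvd_iff.mpr hQ)

end Polynomial

noncomputable def zetaQTerm {l : ℕ} (s : Fin l → ℕ) (Q : Fin l → ℚ[X]) (n : Fin l → ℕ) :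
    PowerSeries ℚ :=
  ∏ j, aeval (PowerSeries.X ^ n j) (Q j) * ((1 - PowerSeries.X ^ n j)⁻¹) ^ s j

section zetaQTerm

variable {l : ℕ} {s : Fin l → ℕ} {Q : Fin l → ℚ[X]}

theorem coeff_zetaQ (m : ℕ) :
    PowerSeries.coeff m (zetaQ l s Q) =
      ∑' n : {n : Fin l → ℕ // StrictAnti n ∧ ∀ i, 0 < n i},
        PowerSeries.coeff m (zetaQTerm s Q n.1) :=
  PowerSeries.coeff_mk _ _

theorem coeff_zetaQTerm_eq_zero (hQ0 : ∀ h : 0 < l, (Q ⟨0, h⟩).coeff 0 = 0)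
    {n : Fin l → ℕ} (hn : Antitone n) {m : ℕ} {j : Fin l} (hm : m < n j) :
    PowerSeries.coeff m (zetaQTerm s Q n) = 0 := by
  set i₀ : Fin l := ⟨0, j.pos⟩
  have hdvd : PowerSeries.X ^ n i₀ ∣ zetaQTerm s Q n :=
    ((dvd_aeval_self_of_coeff_zero_eq_zero (hQ0 j.pos) _).mul_right _).trans
      (Finset.dvd_prod_of_mem _ (Finset.mem_univ i₀))
  exact PowerSeries.X_pow_dvd_iff.mp hdvd m (hm.trans_le (hn (Nat.zero_le _)))

theorem summable_coeff_zetaQTerm (hQ0 : ∀ h : 0 < l, (Q ⟨0, h⟩).coeff 0 = 0) (m : ℕ) :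
    Summable fun n : {n : Fin l → ℕ // StrictAnti n ∧ ∀ i, 0 < n i} =>
      PowerSeries.coeff m (zetaQTerm s Q n.1) := by
  classical
  refine summable_of_ne_finset_zero
    (s := (Fintype.piFinset fun _ => Finset.Iic m).subtype _) fun n hn => ?_
  simp only [Finset.mem_subtype, Fintype.mem_piFinset, Finset.mem_Iic, not_forall, not_le] at hn
  obtain ⟨j, hj⟩ := hn
  exact coeff_zetaQTerm_eq_zero hQ0 n.2.1.antitone hj

theorem zetaQTerm_eq_sum {c : Fin l → ℕ → ℚ}
    (hc : ∀ j, Q j = ∑ i ∈ Finset.range (s j), C (c j i) * X ^ i * (1 - X) ^ (s j - 1 - i))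
    {n : Fin l → ℕ} (hn : ∀ j, 0 < n j) :
    zetaQTerm s Q n = ∑ k ∈ Fintype.piFinset fun j => Finset.range (s j),
      (∏ j, c j (k j)) • zetaQTerm (fun j => k j + 1) (fun j => X ^ k j) n := by
  have hunit (j : Fin l) :
      (1 - PowerSeries.X ^ n j) * (1 - PowerSeries.X ^ n j : PowerSeries ℚ)⁻¹ = 1 :=
    PowerSeries.mul_inv_cancel _ (by simp [zero_pow (hn j).ne'])
  have hfactor (j : Fin l) :
      aeval (PowerSeries.X ^ n j) (Q j) * ((1 - PowerSeries.X ^ n j)⁻¹) ^ s j =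
        ∑ i ∈ Finset.range (s j), c j i • ((PowerSeries.X ^ n j : PowerSeries ℚ) ^ i *
          ((1 - PowerSeries.X ^ n j)⁻¹) ^ (i + 1)) := by
    rw [hc j, map_sum, Finset.sum_mul]
    exact Finset.sum_congr rfl fun i hi =>
      aeval_C_mul_X_pow_mul_one_sub_X_pow_mul_pow (hunit j) _ (Finset.mem_range.mp hi)
  simp only [zetaQTerm, hfactor, Finset.prod_univ_sum, Finset.prod_smul, map_pow, aeval_X]

theorem zetaQ_eq_sum_smul_zetaQ {c : Fin l → ℕ → ℚ}
    (hc : ∀ j, Q j = ∑ i ∈ Finset.range (s j), C (c j i) * X ^ i * (1 - X) ^ (s j - 1 - i))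
    (hc0 : ∀ h : 0 < l, c ⟨0, h⟩ 0 = 0) :
    zetaQ l s Q = ∑ k ∈ Fintype.piFinset (fun j => Finset.range (s j)) with
        ∀ h : 0 < l, k ⟨0, h⟩ ≠ 0,
      (∏ j, c j (k j)) • zetaQ l (fun j => k j + 1) (fun j => X ^ k j) := by
  set K := {k ∈ Fintype.piFinset (fun j => Finset.range (s j)) | ∀ h : 0 < l, k ⟨0, h⟩ ≠ 0}
  have hterm {n : Fin l → ℕ} (hn : ∀ j, 0 < n j) : zetaQTerm s Q n =
      ∑ k ∈ K, (∏ j, c j (k j)) • zetaQTerm (fun j => k j + 1) (fun j => X ^ k j) n := by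
    refine (zetaQTerm_eq_sum hc hn).trans (Finset.sum_filter_of_ne fun k _ hk h hk0 => hk ?_).symm
    rw [Finset.prod_eq_zero (Finset.mem_univ ⟨0, h⟩) (by rw [hk0, hc0]), zero_smul]
  ext m
  have hsum (k) (hk : k ∈ K) :=
    summable_coeff_zetaQTerm (s := fun j => k j + 1) (Q := fun j => X ^ k j)
      (fun h => by simp [coeff_X_pow, ((Finset.mem_filter.mp hk).2 h).symm]) m
  calc PowerSeries.coeff m (zetaQ l s Q)
      = ∑' n : {n : Fin l → ℕ // StrictAnti n ∧ ∀ i, 0 < n i}, ∑ k ∈ K, (∏ j, c j (k j)) *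
          PowerSeries.coeff m (zetaQTerm (fun j => k j + 1) (fun j => X ^ k j) n.1) := by
        rw [coeff_zetaQ]
        refine tsum_congr fun n => ?_
        simp only [hterm n.2.2, map_sum, map_smul, smul_eq_mul]
    _ = ∑ k ∈ K, (∏ j, c j (k j)) * ∑' n : {n : Fin l → ℕ // StrictAnti n ∧ ∀ i, 0 < n i},
          PowerSeries.coeff m (zetaQTerm (fun j => k j + 1) (fun j => X ^ k j) n.1) := by
        rw [Summable.tsum_finsetSum fun k hk => (hsum k hk).mul_left _]
        simp_rw [tsum_mul_left]
    _ = _ := by simp only [map_sum, map_smul, smul_eq_mul, coeff_zetaQ]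

end zetaQTerm

/-- Z_q[1] equals the ℚ-span of the Bradley–Zhao model
ζ^BZ_q(s_1,…,s_l) = ζ_q(s_1,…,s_l; t^{s_1−1},…,t^{s_l−1}) with s_1 ≥ 2, s_2,…,s_l ≥ 1. -/
theorem Zq1_eq_span_BradleyZhao :
    Zq1 = Submodule.span ℚ {f | ∃ (l : ℕ) (s : Fin l → ℕ),
      (∀ j, 1 ≤ s j) ∧ (∀ h : 0 < l, 2 ≤ s ⟨0, h⟩) ∧
      f = zetaQ l s (fun j => Polynomial.X ^ (s j - 1))} := by
  refine le_antisymm (Submodule.span_le.mpr ?_) (Submodule.span_le.mpr ?_)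
  · rintro _ ⟨l, s, Q, -, hdeg, hQ0, rfl⟩
    have hdeg_lt (j : Fin l) : (Q j).degree < s j := by
      rcases hdeg j with hQ | hQ
      · simp [hQ]
      · exact degree_le_natDegree.trans_lt (by exact_mod_cast hQ)
    choose c hc0 hc using fun j => exists_eq_sum_C_mul_X_pow_mul_one_sub_X_pow (hdeg_lt j)
    rw [zetaQ_eq_sum_smul_zetaQ hc fun h => (hc0 _).trans (hQ0 h)]
    refine Submodule.sum_mem _ fun k hk => Submodule.smul_mem _ _ (Submodule.subset_span
      ⟨l, fun j => k j + 1, fun j => Nat.le_add_left 1 (k j), fun h => ?_, rfl⟩)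
    exact Nat.succ_le_succ (Nat.one_le_iff_ne_zero.mpr ((Finset.mem_filter.mp hk).2 h))
  · rintro _ ⟨l, s, hs, hs2, rfl⟩
    refine Submodule.subset_span ⟨l, s, _, hs, fun j => Or.inr ?_, fun h => ?_, rfl⟩
    · rw [natDegree_X_pow]
      have := hs j
      omega
    · have := hs2 h
      rw [coeff_X_pow, if_neg (by omega)]
end

section
/- Let ζ^SZ_q(s_1,…,s_l) = Σ_{n_1>⋯>n_l>0} q^{n_1s_1}⋯q^{n_ls_l} / ((1−q^{n_1})^{s_1}⋯(1−q^{n_l})^{s_l}) ∈ ℚ[[q]] for integers s_1 ≥ 1, s_2,…,s_l ≥ 0 (a factor with s_j = 0 being equal to 1). Then Z_q = ⟨ ζ^SZ_q(s_1,…,s_l) : l ≥ 0, s_1 ≥ 1, s_2,…,s_l ≥ 0 ⟩_ℚ and Z_q° = ⟨ ζ^SZ_q(s_1,…,s_l) : l ≥ 0, s_1,…,s_l ≥ 1 ⟩_ℚ. -/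
/-- The Schlesinger–Zudilin model:
ζ^SZ_q(s_1,…,s_l) = Σ_{n_1>⋯>n_l>0} q^{n_1s_1}⋯q^{n_ls_l}/((1−q^{n_1})^{s_1}⋯(1−q^{n_l})^{s_l})
= ζ_q(s_1,…,s_l; t^{s_1},…,t^{s_l}) (a factor with s_j = 0 equals 1). -/
noncomputable def zetaSZ (l : ℕ) (s : Fin l → ℕ) : PowerSeries ℚ :=
  zetaQ l s fun j => Polynomial.X ^ (s j)

/-- Z_q: the ℚ-span of the ζ_q(s_1,…,s_l;Q_1,…,Q_l) with l ≥ 0, all s_j ≥ 1,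
deg Q_j ≤ s_j and Q_1 ∈ tℚ[t]. -/
noncomputable def Zq : Submodule ℚ (PowerSeries ℚ) :=
  Submodule.span ℚ {f | ∃ (l : ℕ) (s : Fin l → ℕ) (Q : Fin l → Polynomial ℚ),
    (∀ j, 1 ≤ s j) ∧ (∀ j, (Q j).natDegree ≤ s j) ∧
    (∀ h : 0 < l, (Q ⟨0, h⟩).coeff 0 = 0) ∧ f = zetaQ l s Q}

/-- Z_q°: as Z_q, but with all Q_j ∈ tℚ[t]. -/
noncomputable def Zqc : Submodule ℚ (PowerSeries ℚ) :=
  Submodule.span ℚ {f | ∃ (l : ℕ) (s : Fin l → ℕ) (Q : Fin l → Polynomial ℚ),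
    (∀ j, 1 ≤ s j) ∧ (∀ j, (Q j).natDegree ≤ s j) ∧
    (∀ j, (Q j).coeff 0 = 0) ∧ f = zetaQ l s Q}

/-!
Put `u = q^n/(1-q^n)`. Then `1/(1-q^n) = 1 + u`, so `q^{kn}/(1-q^n)^s = u^k (1+u)^{s-k}` for
`k ≤ s`, and for `deg Q ≤ s` we get `Q(q^n)/(1-q^n)^s = P(u)` with a polynomial `P` that does
not depend on `n` and has `P(0) = Q(0)`. Expanding the product over `j` writes `ζ_q(s;Q)` as a
finite `ℚ`-combination of the `ζ^SZ_q(i)` with `i_j = 0` only where `Q_j(0) ≠ 0`. Conversely a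
factor with `s_j = 0` of `ζ^SZ_q` is `1 = (1-q^n)/(1-q^n)`, i.e. `s_j = 1` and `Q_j = 1 - t`.
-/

open Finset

section Polynomial

open scoped Polynomial

variable {K R : Type*} [CommRing K] [CommRing R] [Algebra K R]

/-- The polynomial `P(u) = (1+u)^s Q(u/(1+u))`, so that `Q(t)/(1-t)^s = P(t/(1-t))`. -/
noncomputable def toSZPoly (s : ℕ) (Q : K[X]) : K[X] :=
  ∑ k ∈ range (s + 1), Polynomial.C (Q.coeff k) * Polynomial.X ^ k * (1 + Polynomial.X) ^ (s - k)

theorem toSZPoly_coeff_zero (s : ℕ) (Q : K[X]) : (toSZPoly s Q).coeff 0 = Q.coeff 0 := by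
  simp [toSZPoly, Polynomial.coeff_zero_eq_eval_zero, Polynomial.eval_finsetSum, zero_pow_eq]

theorem aeval_mul_pow_eq_aeval_toSZPoly {t v : R} (htv : (1 - t) * v = 1) {s : ℕ} {Q : K[X]}
    (hQ : Q.natDegree ≤ s) :
    Polynomial.aeval t Q * v ^ s = Polynomial.aeval (t * v) (toSZPoly s Q) := by
  have hv : v = 1 + t * v := by linear_combination htv
  have hterm : ∀ k ≤ s, t ^ k * v ^ s = (t * v) ^ k * (1 + t * v) ^ (s - k) := fun k hk => by
    rw [← hv, mul_pow, mul_assoc, ← pow_add, Nat.add_sub_cancel' hk]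
  rw [Polynomial.aeval_eq_sum_range' (Nat.lt_succ_of_le hQ), Finset.sum_mul, toSZPoly, map_sum]
  refine Finset.sum_congr rfl fun k hk => ?_
  simp [Algebra.smul_def, mul_assoc, hterm k (Nat.le_of_lt_succ (mem_range.1 hk))]

theorem prod_aeval_eq_sum {ι : Type*} [Fintype ι] [DecidableEq ι] (P : ι → K[X]) (y : ι → R) :
    ∏ j, Polynomial.aeval (y j) (P j) =
      ∑ i ∈ Fintype.piFinset fun j => range ((P j).natDegree + 1),
        (∏ j, (P j).coeff (i j)) • ∏ j, y j ^ i j := by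
  simp_rw [Polynomial.aeval_eq_sum_range, Finset.prod_univ_sum, Finset.prod_smul]

end Polynomial

abbrev PosStrictAnti (l : ℕ) := {n : Fin l → ℕ // StrictAnti n ∧ ∀ i, 0 < n i}

theorem PosStrictAnti.finite_setOf_head_le (l m : ℕ) :
    {x : PosStrictAnti l | ∀ h : 0 < l, x.1 ⟨0, h⟩ ≤ m}.Finite := by
  refine ((Set.Finite.pi fun _ => Set.finite_Iic m).preimage
    Subtype.val_injective.injOn).subset fun x hx j _ => ?_
  exact (x.2.1.antitone (show ⟨0, j.pos⟩ ≤ j from Nat.zero_le _)).trans (hx j.pos)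

theorem summable_coeff_of_X_pow_head_dvd {S : Type*} [Semiring S] [TopologicalSpace S] {l : ℕ}
    {F : PosStrictAnti l → PowerSeries S}
    (hF : ∀ x (h : 0 < l), PowerSeries.X ^ x.1 ⟨0, h⟩ ∣ F x) (m : ℕ) :
    Summable fun x => PowerSeries.coeff m (F x) := by
  refine summable_of_hasFiniteSupport ((PosStrictAnti.finite_setOf_head_le l m).subset
    fun x hx h => ?_)
  by_contra! hm
  exact hx (PowerSeries.X_pow_dvd_iff.1 (hF x h) m hm)

theorem PowerSeries.one_sub_X_pow_mul_inv {F : Type*} [Field F] {n : ℕ} (hn : 0 < n) :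
    (1 - PowerSeries.X ^ n : PowerSeries F) * (1 - PowerSeries.X ^ n)⁻¹ = 1 :=
  PowerSeries.mul_inv_cancel _ (by simp [hn.ne'])

theorem coeff_zetaSZ (l m : ℕ) (i : Fin l → ℕ) :
    PowerSeries.coeff m (zetaSZ l i) = ∑' x : PosStrictAnti l,
      PowerSeries.coeff m (∏ j, (PowerSeries.X ^ x.1 j * (1 - PowerSeries.X ^ x.1 j)⁻¹) ^ i j) := by
  simp [zetaSZ, zetaQ, mul_pow]

theorem zetaQ_eq_sum_smul_zetaSZ (l : ℕ) (s : Fin l → ℕ) (Q : Fin l → Polynomial ℚ)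
    (hdeg : ∀ j, (Q j).natDegree ≤ s j) (h0 : ∀ h : 0 < l, (Q ⟨0, h⟩).coeff 0 = 0) :
    zetaQ l s Q = ∑ i ∈ Fintype.piFinset fun j => range ((toSZPoly (s j) (Q j)).natDegree + 1),
      (∏ j, (toSZPoly (s j) (Q j)).coeff (i j)) • zetaSZ l i := by
  set P := fun j => toSZPoly (s j) (Q j)
  set I := Fintype.piFinset fun j => range ((P j).natDegree + 1)
  set u : ℕ → PowerSeries ℚ := fun n => PowerSeries.X ^ n * (1 - PowerSeries.X ^ n)⁻¹
  have hsummand (x : PosStrictAnti l) :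
      ∏ j, Polynomial.aeval (PowerSeries.X ^ x.1 j) (Q j) * ((1 - PowerSeries.X ^ x.1 j)⁻¹) ^ s j =
        ∑ i ∈ I, (∏ j, (P j).coeff (i j)) • ∏ j, u (x.1 j) ^ i j := by
    rw [← prod_aeval_eq_sum]
    exact prod_congr rfl fun j _ => aeval_mul_pow_eq_aeval_toSZPoly
      (PowerSeries.one_sub_X_pow_mul_inv (x.2.2 j)) (hdeg j)
  -- `P_1(0) = Q_1(0) = 0`, so only terms with `i_1 ≥ 1` survive, and those vanish for `n_1 > m`.
  have hsummable (m : ℕ) : ∀ i ∈ I, Summable fun x : PosStrictAnti l =>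
      (∏ j, (P j).coeff (i j)) * PowerSeries.coeff m (∏ j, u (x.1 j) ^ i j) := by
    intro i _
    by_cases hc : ∏ j, (P j).coeff (i j) = 0
    · simp [hc]
    refine Summable.mul_left _ (summable_coeff_of_X_pow_head_dvd
      (F := fun x => ∏ j, u (x.1 j) ^ i j) (fun x h => ?_) m)
    have hi : i ⟨0, h⟩ ≠ 0 := fun hi =>
      hc (prod_eq_zero (mem_univ _) (by rw [hi, toSZPoly_coeff_zero, h0 h]))
    exact (dvd_mul_right _ _).trans ((dvd_pow_self _ hi).trans (dvd_prod_of_mem _ (mem_univ _)))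
  ext m
  simp only [zetaQ, PowerSeries.coeff_mk, hsummand, map_sum, PowerSeries.coeff_smul, smul_eq_mul,
    coeff_zetaSZ]
  rw [Summable.tsum_finsetSum (hsummable m)]
  exact sum_congr rfl fun i _ => tsum_mul_left

theorem zetaQ_mem_span_zetaSZ (l : ℕ) (s : Fin l → ℕ) (Q : Fin l → Polynomial ℚ)
    (hdeg : ∀ j, (Q j).natDegree ≤ s j) (h0 : ∀ h : 0 < l, (Q ⟨0, h⟩).coeff 0 = 0)
    {T : Set (PowerSeries ℚ)}
    (hT : ∀ i : Fin l → ℕ, (∀ j, (Q j).coeff 0 = 0 → i j ≠ 0) → zetaSZ l i ∈ T) :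
    zetaQ l s Q ∈ Submodule.span ℚ T := by
  rw [zetaQ_eq_sum_smul_zetaSZ l s Q hdeg h0]
  refine Submodule.sum_mem _ fun i _ => ?_
  by_cases hc : ∏ j, (toSZPoly (s j) (Q j)).coeff (i j) = 0
  · simp [hc]
  refine Submodule.smul_mem _ _ (Submodule.subset_span (hT i fun j hj hi => hc ?_))
  exact prod_eq_zero (mem_univ j) (by rw [hi, toSZPoly_coeff_zero, hj])

theorem zetaQ_congr {l : ℕ} {s s' : Fin l → ℕ} {Q Q' : Fin l → Polynomial ℚ}
    (h : ∀ j, ∀ n, 0 < n →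
      Polynomial.aeval (PowerSeries.X ^ n : PowerSeries ℚ) (Q j) * (1 - PowerSeries.X ^ n)⁻¹ ^ s j =
        Polynomial.aeval (PowerSeries.X ^ n) (Q' j) * (1 - PowerSeries.X ^ n)⁻¹ ^ s' j) :
    zetaQ l s Q = zetaQ l s' Q' := by
  ext m
  simp only [zetaQ, PowerSeries.coeff_mk]
  exact tsum_congr fun x => congrArg _ (prod_congr rfl fun j _ => h j _ (x.2.2 j))

theorem zetaSZ_eq_zetaQ (l : ℕ) (s : Fin l → ℕ) :
    zetaSZ l s = zetaQ l (fun j => max (s j) 1)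
      (fun j => if s j = 0 then 1 - Polynomial.X else Polynomial.X ^ s j) :=
  zetaQ_congr fun j n hn => by
    by_cases hj : s j = 0
    · simp [hj, PowerSeries.one_sub_X_pow_mul_inv hn]
    · simp [hj, max_eq_left (Nat.one_le_iff_ne_zero.2 hj)]

/-- Z_q is spanned by the ζ^SZ_q(s_1,…,s_l) with s_1 ≥ 1, s_2,…,s_l ≥ 0, and
Z_q° is spanned by the ζ^SZ_q(s_1,…,s_l) with all s_j ≥ 1. -/
theorem Zq_Zqc_eq_span_SZ :
    Zq = Submodule.span ℚ {f | ∃ (l : ℕ) (s : Fin l → ℕ),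
      (∀ h : 0 < l, 1 ≤ s ⟨0, h⟩) ∧ f = zetaSZ l s} ∧
    Zqc = Submodule.span ℚ {f | ∃ (l : ℕ) (s : Fin l → ℕ),
      (∀ j, 1 ≤ s j) ∧ f = zetaSZ l s} := by
  unfold Zq Zqc
  refine ⟨le_antisymm ?_ ?_, le_antisymm ?_ ?_⟩ <;> rw [Submodule.span_le]
  · rintro f ⟨l, s, Q, -, hdeg, h0, rfl⟩
    exact zetaQ_mem_span_zetaSZ l s Q hdeg h0 fun i hi =>
      ⟨l, i, fun h => Nat.one_le_iff_ne_zero.2 (hi _ (h0 h)), rfl⟩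
  · rintro f ⟨l, s, hs, rfl⟩
    refine Submodule.subset_span ⟨l, _, _, fun j => le_max_right _ _, fun j => ?_,
      fun h => ?_, zetaSZ_eq_zetaQ l s⟩
    · split_ifs
      · exact (Polynomial.natDegree_sub_le _ _).trans (by simp)
      · simp
    · have hs₀ : s ⟨0, h⟩ ≠ 0 := Nat.one_le_iff_ne_zero.1 (hs h)
      simp [hs₀, hs₀.symm, Polynomial.coeff_X_pow]
  · rintro f ⟨l, s, Q, -, hdeg, h0, rfl⟩
    exact zetaQ_mem_span_zetaSZ l s Q hdeg (fun _ => h0 _) fun i hi =>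
      ⟨l, i, fun j => Nat.one_le_iff_ne_zero.2 (hi j (h0 j)), rfl⟩
  · rintro f ⟨l, s, hs, rfl⟩
    exact Submodule.subset_span ⟨l, s, fun j => Polynomial.X ^ s j, hs, by simp,
      fun j => by simp [Nat.ne_of_lt (hs j), Polynomial.coeff_X_pow], rfl⟩
end

section
/- For s ≥ 2 let Q^O_s(t) = t^{s/2} if s is even and Q^O_s(t) = t^{(s−1)/2}(1+t) if s is odd, and set Z^O(s_1,…,s_l) = ζ_q(s_1,…,s_l; Q^O_{s_1},…,Q^O_{s_l}) (the Okounkov model). Then Z_q°[1] = ⟨ Z^O(s_1,…,s_l) : l ≥ 0, s_1,…,s_l ≥ 2 ⟩_ℚ. -/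
/-- Okounkov's polynomials: Q^O_s(t) = t^{s/2} for even s and t^{(s−1)/2}(1+t) for odd s. -/
noncomputable def okounkovQ (s : ℕ) : Polynomial ℚ :=
  if Even s then Polynomial.X ^ (s / 2) else Polynomial.X ^ ((s - 1) / 2) * (1 + Polynomial.X)

/-- The Okounkov model Z^O(s_1,…,s_l) = ζ_q(s_1,…,s_l; Q^O_{s_1},…,Q^O_{s_l}). -/
noncomputable def okounkovZ (l : ℕ) (s : Fin l → ℕ) : PowerSeries ℚ :=
  zetaQ l s fun j => okounkovQ (s j)

/-- Z_q°[1]: the ℚ-span of the ζ_q(s_1,…,s_l;Q_1,…,Q_l) with l ≥ 0, all s_j ≥ 1,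
deg Q_j ≤ s_j − 1 (i.e. Q_j = 0 or natDegree Q_j + 1 ≤ s_j) and all Q_j ∈ tℚ[t]. -/
noncomputable def Zqc1 : Submodule ℚ (PowerSeries ℚ) :=
  Submodule.span ℚ {f | ∃ (l : ℕ) (s : Fin l → ℕ) (Q : Fin l → Polynomial ℚ),
    (∀ j, 1 ≤ s j) ∧ (∀ j, Q j = 0 ∨ (Q j).natDegree + 1 ≤ s j) ∧
    (∀ j, (Q j).coeff 0 = 0) ∧ f = zetaQ l s Q}

/-!
A polynomial `P` with `P(0) = 0` and `deg P < s` is a ℚ-combination of the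
`Q^O_k · (1 - t)^(s - k)`, `2 ≤ k ≤ s` (peel off `P(1)/Q^O_s(1) · Q^O_s`, divide the rest by
`1 - t` and induct on `s`). Substituting `t = q^n`, the factor `(1 - q^n)^(s - k)` cancels
against the denominator, so every factor `Q_j(q^{n_j}) / (1 - q^{n_j})^{s_j}` of a generator
of `Z_q°[1]` is a combination of Okounkov factors with the same coefficients for all `n_j`.
Expanding the product and summing over `n` writes the generator as a combination of
Okounkov values. Conversely each `Q^O_s` is itself an admissible numerator.
-/

open Polynomial

lemma okounkovQ_coeff_zero {s : ℕ} (hs : 2 ≤ s) : (okounkovQ s).coeff 0 = 0 := by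
  unfold okounkovQ
  split_ifs with h
  · rw [coeff_X_pow, if_neg (by omega)]
  · rw [Nat.even_iff] at h
    rw [mul_coeff_zero, coeff_X_pow, if_neg (by omega), zero_mul]

lemma okounkovQ_natDegree_lt {s : ℕ} (hs : 2 ≤ s) : (okounkovQ s).natDegree < s := by
  unfold okounkovQ
  split_ifs with h
  · rw [natDegree_X_pow]
    omega
  · rw [Nat.even_iff] at h
    have : (X ^ ((s - 1) / 2) * (1 + X) : ℚ[X]).natDegree ≤ (s - 1) / 2 + 1 := by
      compute_degree!
    omega

lemma okounkovQ_eval_one_ne_zero (s : ℕ) : (okounkovQ s).eval 1 ≠ 0 := by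
  unfold okounkovQ
  split_ifs <;> simp

lemma exists_eq_one_sub_X_mul_of_eval_one_eq_zero {R : Type*} [CommRing R] [Nontrivial R]
    {P : R[X]} (h : P.eval 1 = 0) :
    ∃ D : R[X], P = (1 - X) * D ∧ D.natDegree = P.natDegree - 1 := by
  refine ⟨-(P /ₘ (X - C 1)), ?_, ?_⟩
  · have := mul_divByMonic_eq_iff_isRoot.2 h
    rw [C_1] at this ⊢
    linear_combination this.symm
  · rw [natDegree_neg, natDegree_divByMonic _ (monic_X_sub_C 1), natDegree_X_sub_C]

theorem exists_eq_sum_okounkovQ_mul_one_sub_X_pow {s : ℕ} {P : ℚ[X]} (h0 : P.coeff 0 = 0)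
    (hP : P.natDegree < s) :
    ∃ c : ℕ → ℚ, P = ∑ k ∈ Finset.Icc 2 s, c k • (okounkovQ k * (1 - X) ^ (s - k)) := by
  induction s generalizing P with
  | zero => omega
  | succ s ih =>
    obtain rfl | hs := Nat.eq_zero_or_pos s
    · refine ⟨0, ?_⟩
      rw [eq_C_of_natDegree_eq_zero (p := P) (by omega), h0]
      simp
    have hQ0 := okounkovQ_coeff_zero (s := s + 1) (by omega)
    have hQdeg := okounkovQ_natDegree_lt (s := s + 1) (by omega)
    set a := P.eval 1 / (okounkovQ (s + 1)).eval 1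
    have hroot : (P - a • okounkovQ (s + 1)).eval 1 = 0 := by
      rw [eval_sub, eval_smul, smul_eq_mul, div_mul_cancel₀ _ (okounkovQ_eval_one_ne_zero _),
        sub_self]
    obtain ⟨D, hPD, hD⟩ := exists_eq_one_sub_X_mul_of_eval_one_eq_zero hroot
    have hD0 : D.coeff 0 = 0 := by
      simpa [mul_coeff_zero, h0, hQ0] using (congrArg (coeff · 0) hPD).symm
    have hDdeg : D.natDegree < s := by
      have := natDegree_sub_le P (a • okounkovQ (s + 1))
      have := natDegree_smul_le a (okounkovQ (s + 1))
      omega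
    obtain ⟨c, hc⟩ := ih hD0 hDdeg
    refine ⟨Function.update c (s + 1) a, ?_⟩
    rw [Finset.sum_Icc_succ_top (by omega), Function.update_self, Nat.sub_self, pow_zero, mul_one,
      ← sub_eq_iff_eq_add, hPD, hc, Finset.mul_sum]
    refine Finset.sum_congr rfl fun k hk => ?_
    have hk := (Finset.mem_Icc.1 hk).2
    rw [Function.update_of_ne (by omega), mul_smul_comm, Nat.sub_add_comm hk, pow_succ]
    congr 1
    ring

noncomputable def zetaFactor (P : ℚ[X]) (s n : ℕ) : PowerSeries ℚ :=
  aeval (PowerSeries.X ^ n) P * ((1 - PowerSeries.X ^ n)⁻¹) ^ s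

lemma zetaFactor_mul_one_sub_X_pow {s k n : ℕ} (hn : 0 < n) (hk : k ≤ s) (P : ℚ[X]) :
    zetaFactor (P * (1 - X) ^ (s - k)) s n = zetaFactor P k n := by
  have hunit : (1 - PowerSeries.X ^ n : PowerSeries ℚ) * (1 - PowerSeries.X ^ n)⁻¹ = 1 :=
    PowerSeries.mul_inv_cancel _ (by simp [zero_pow hn.ne'])
  obtain ⟨d, rfl⟩ := Nat.exists_eq_add_of_le hk
  rw [zetaFactor, zetaFactor, Nat.add_sub_cancel_left, map_mul, map_pow, map_sub, map_one, aeval_X,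
    pow_add]
  have hcancel :
      (1 - PowerSeries.X ^ n : PowerSeries ℚ) ^ d * ((1 - PowerSeries.X ^ n)⁻¹) ^ d = 1 := by
    rw [← mul_pow, hunit, one_pow]
  linear_combination (aeval (PowerSeries.X ^ n) P * ((1 - PowerSeries.X ^ n)⁻¹) ^ k) * hcancel

noncomputable def zetaSummand {l : ℕ} (s : Fin l → ℕ) (Q : Fin l → ℚ[X]) (n : Fin l → ℕ) :
    PowerSeries ℚ :=
  ∏ j, zetaFactor (Q j) (s j) (n j)

lemma zetaFactor_sum_smul_mul_one_sub_X_pow {s n : ℕ} (hn : 0 < n) {K : Finset ℕ}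
    (hK : ∀ k ∈ K, k ≤ s) (c : ℕ → ℚ) (P : ℕ → ℚ[X]) :
    zetaFactor (∑ k ∈ K, c k • (P k * (1 - X) ^ (s - k))) s n
      = ∑ k ∈ K, c k • zetaFactor (P k) k n := by
  simp only [zetaFactor, map_sum, map_smul, Finset.sum_mul, smul_mul_assoc]
  exact Finset.sum_congr rfl fun k hk => congrArg _ (zetaFactor_mul_one_sub_X_pow hn (hK k hk) _)

lemma zetaSummand_eq_sum {l : ℕ} {s : Fin l → ℕ} {Q : Fin l → ℚ[X]} {n : Fin l → ℕ}
    {K : Fin l → Finset ℕ} {c : Fin l → ℕ → ℚ} {R : ℕ → ℚ[X]}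
    (h : ∀ j, zetaFactor (Q j) (s j) (n j) = ∑ k ∈ K j, c j k • zetaFactor (R k) k (n j)) :
    zetaSummand s Q n
      = ∑ κ ∈ Fintype.piFinset K, (∏ j, c j (κ j)) • zetaSummand κ (fun j => R (κ j)) n := by
  classical
  simp only [zetaSummand, h, Finset.prod_univ_sum, Finset.prod_smul]

lemma coeff_zetaSummand_eq_zero {l : ℕ} {s : Fin l → ℕ} {Q : Fin l → ℚ[X]} {n : Fin l → ℕ}
    {j : Fin l} (hQ : (Q j).coeff 0 = 0) {m : ℕ} (hm : m < n j) :
    PowerSeries.coeff m (zetaSummand s Q n) = 0 := by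
  obtain ⟨D, hD⟩ := X_dvd_iff.2 hQ
  have hX : PowerSeries.X ^ n j ∣ zetaFactor (Q j) (s j) (n j) :=
    Dvd.dvd.mul_right (by rw [hD, map_mul, aeval_X]; exact dvd_mul_right _ _) _
  refine PowerSeries.X_pow_dvd_iff.1 (hX.trans ?_) m hm
  exact Finset.dvd_prod_of_mem (fun i => zetaFactor (Q i) (s i) (n i)) (Finset.mem_univ j)

lemma finite_setOf_forall_le (l m : ℕ) :
    {n : {n : Fin l → ℕ // StrictAnti n ∧ ∀ i, 0 < n i} | ∀ j, n.1 j ≤ m}.Finite :=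
  (Set.finite_Iic fun _ => m).preimage Subtype.val_injective.injOn

lemma coeff_zetaQ_s8 {l : ℕ} {s : Fin l → ℕ} {Q : Fin l → ℚ[X]} (hQ : ∀ j, (Q j).coeff 0 = 0)
    (m : ℕ) :
    PowerSeries.coeff m (zetaQ l s Q)
      = ∑ n ∈ (finite_setOf_forall_le l m).toFinset, PowerSeries.coeff m (zetaSummand s Q n.1) := by
  rw [zetaQ, PowerSeries.coeff_mk]
  refine tsum_eq_sum fun n hn => ?_
  simp only [Set.Finite.mem_toFinset, Set.mem_ofPred_eq, not_forall, not_le] at hn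
  obtain ⟨j, hj⟩ := hn
  exact coeff_zetaSummand_eq_zero (hQ j) hj

theorem zetaQ_eq_sum {l : ℕ} {s : Fin l → ℕ} {Q : Fin l → ℚ[X]} {K : Fin l → Finset ℕ}
    {c : Fin l → ℕ → ℚ} {R : ℕ → ℚ[X]} (hQ : ∀ j, (Q j).coeff 0 = 0)
    (hR : ∀ j, ∀ k ∈ K j, (R k).coeff 0 = 0)
    (h : ∀ j n, 0 < n → zetaFactor (Q j) (s j) n = ∑ k ∈ K j, c j k • zetaFactor (R k) k n) :
    zetaQ l s Q = ∑ κ ∈ Fintype.piFinset K, (∏ j, c j (κ j)) • zetaQ l κ (fun j => R (κ j)) := by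
  ext m
  have hterm (n : {n : Fin l → ℕ // StrictAnti n ∧ ∀ i, 0 < n i}) :
      PowerSeries.coeff m (zetaSummand s Q n.1) = ∑ κ ∈ Fintype.piFinset K,
        (∏ j, c j (κ j)) • PowerSeries.coeff m (zetaSummand κ (fun j => R (κ j)) n.1) := by
    rw [zetaSummand_eq_sum fun j => h j _ (n.2.2 j), map_sum]
    simp only [PowerSeries.coeff_smul]
  rw [coeff_zetaQ_s8 hQ, map_sum, Finset.sum_congr rfl fun n _ => hterm n, Finset.sum_comm]
  refine Finset.sum_congr rfl fun κ hκ => ?_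
  rw [PowerSeries.coeff_smul, coeff_zetaQ_s8 (fun j => hR j _ (Fintype.mem_piFinset.1 hκ j)),
    Finset.smul_sum]

lemma zetaQ_mem_span_okounkovZ {l : ℕ} {s : Fin l → ℕ} {Q : Fin l → ℚ[X]}
    (h0 : ∀ j, (Q j).coeff 0 = 0) (hdeg : ∀ j, (Q j).natDegree < s j) :
    zetaQ l s Q ∈ Submodule.span ℚ {f | ∃ (l : ℕ) (s : Fin l → ℕ),
      (∀ j, 2 ≤ s j) ∧ f = okounkovZ l s} := by
  choose c hc using fun j => exists_eq_sum_okounkovQ_mul_one_sub_X_pow (h0 j) (hdeg j)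
  rw [zetaQ_eq_sum (K := fun j => Finset.Icc 2 (s j)) (c := c) h0
    (fun _ _ hk => okounkovQ_coeff_zero (Finset.mem_Icc.1 hk).1)
    fun j n hn => hc j ▸ zetaFactor_sum_smul_mul_one_sub_X_pow hn
      (fun _ hk => (Finset.mem_Icc.1 hk).2) _ _]
  exact Submodule.sum_mem _ fun κ hκ => Submodule.smul_mem _ _ <| Submodule.subset_span
    ⟨l, κ, fun j => (Finset.mem_Icc.1 (Fintype.mem_piFinset.1 hκ j)).1, rfl⟩

lemma okounkovZ_mem_Zqc1 {l : ℕ} {s : Fin l → ℕ} (hs : ∀ j, 2 ≤ s j) : okounkovZ l s ∈ Zqc1 :=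
  Submodule.subset_span ⟨l, s, _, fun j => (hs j).trans' one_le_two,
    fun j => Or.inr (okounkovQ_natDegree_lt (hs j)), fun j => okounkovQ_coeff_zero (hs j), rfl⟩

/-- Z_q°[1] equals the ℚ-span of the Okounkov model Z^O(s_1,…,s_l) with all s_j ≥ 2. -/
theorem Zqc1_eq_span_okounkov :
    Zqc1 = Submodule.span ℚ {f | ∃ (l : ℕ) (s : Fin l → ℕ),
      (∀ j, 2 ≤ s j) ∧ f = okounkovZ l s} := by
  apply le_antisymm
  · refine Submodule.span_le.2 ?_
    rintro _ ⟨l, s, Q, hs, hdeg, h0, rfl⟩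
    refine zetaQ_mem_span_okounkovZ h0 fun j => (hdeg j).elim (fun hQ => ?_) id
    rw [hQ, natDegree_zero]
    exact hs j
  · refine Submodule.span_le.2 ?_
    rintro _ ⟨l, s, hs, rfl⟩
    exact okounkovZ_mem_Zqc1 hs
end
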